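/- Let G be a linearly ordered abelian group. For all b, c in K((G)): (i) ot(b + c) ≤ ot(b) ♯ ot(c), and (ii) ot(b · c) ≤ ot(b) ⨳ ot(c), where ♯ is the Hessenberg natural sum and ⨳ the Hessenberg natural product of ordinals. -/

import Mathlib

/-! `ot (s ∪ t) ≤ ot s ♯ ot t` for well-ordered sets: the initial segment of `s ∪ t` below a point
is the union of those of `s` and `t`, one of which is strictly shorter, so induction on
`ot s ♯ ot t` applies. Since `supp (b * c) ⊆ supp b + supp c`, the product bound reduces to
`ot (S + T) ≤ ot S ⨳ ot T`, again by induction on `ot S ♯ ot T` (Carruth's argument). If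
`ot S = ω ^ μ` and `ot T = ω ^ ν`, the initial segment of `S + T` below `a + b` lies in
`(S_{<a} + T) ∪ (S + T_{<b})`, whose order type is `< ω ^ (μ ♯ ν) = ω ^ μ ⨳ ω ^ ν` because powers
of `ω` are closed under `♯`. Otherwise, say `ω ^ μ < ot S` for `μ = log ω (ot S)`; cutting `S`
after its first `ω ^ μ` elements gives `S = S₁ ∪ S₂` with `ot S₁ ♯ ot S₂ ≤ ot S`, and
distributivity of `⨳` over `♯` concludes. -/

universe u

namespace Ordinal

/-- Natural (Hessenberg) sum of ordinals, as defined in Mathlib (December 2024). -/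
noncomputable def nadd (a b : Ordinal.{u}) : Ordinal.{u} :=
  max (⨆ x : Set.Iio a, Order.succ (nadd x.1 b)) (⨆ x : Set.Iio b, Order.succ (nadd a x.1))
termination_by (a, b)
decreasing_by all_goals cases x; decreasing_tactic

namespace NaturalOps
scoped infixl:65 " ♯ " => Ordinal.nadd
end NaturalOps

open NaturalOps

/-- Natural (Hessenberg) product of ordinals, as defined in Mathlib (December 2024). -/
noncomputable def nmul (a b : Ordinal.{u}) : Ordinal.{u} :=
  sInf {c | ∀ a' < a, ∀ b' < b, nmul a' b ♯ nmul a b' < c ♯ nmul a' b'}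
termination_by (a, b)

namespace NaturalOps
scoped infixl:70 " ⨳ " => Ordinal.nmul
end NaturalOps

end Ordinal

open Ordinal NaturalOps

/-- The ordinal order type of a well-ordered subset of a linear order. -/
noncomputable def orderTypeSet {Γ : Type*} [LinearOrder Γ] (s : Set Γ) (hs : s.IsWF) : Ordinal :=
  letI : IsWellFounded s (· < ·) := ⟨hs⟩
  Ordinal.type ((· < ·) : s → s → Prop)

/-- The order type `ot b` of the support of a Hahn series. -/
noncomputable def HahnSeries.ot {Γ : Type*} [LinearOrder Γ] {R : Type*} [Zero R]
    (b : HahnSeries Γ R) : Ordinal :=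
  orderTypeSet b.support b.isWF_support

/-- The degree of a Hahn series: the largest ordinal `β` with `ω ^ β ≤ ot b`
(for a nonzero series), implemented as the base-`ω` ordinal logarithm of `ot b`. -/
noncomputable def HahnSeries.deg {Γ : Type*} [LinearOrder Γ] {R : Type*} [Zero R]
    (b : HahnSeries Γ R) : Ordinal :=
  Ordinal.log Ordinal.omega0 b.ot

namespace Ordinal

open NaturalOps

variable {a b c : Ordinal.{u}}

theorem lt_nadd_iff : a < b ♯ c ↔ (∃ b' < b, a ≤ b' ♯ c) ∨ ∃ c' < c, a ≤ b ♯ c' := by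
  rw [nadd, lt_max_iff, Ordinal.lt_iSup_iff, Ordinal.lt_iSup_iff]
  simp only [Order.lt_succ_iff, Subtype.exists, Set.mem_Iio, exists_prop]

theorem nadd_le_iff : b ♯ c ≤ a ↔ (∀ b' < b, b' ♯ c < a) ∧ ∀ c' < c, b ♯ c' < a := by
  rw [← not_lt, lt_nadd_iff]
  push Not
  rfl

theorem nadd_lt_nadd_left (h : b < c) (a : Ordinal) : a ♯ b < a ♯ c :=
  lt_nadd_iff.2 (Or.inr ⟨b, h, le_rfl⟩)

theorem nadd_lt_nadd_right (h : b < c) (a : Ordinal) : b ♯ a < c ♯ a :=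
  lt_nadd_iff.2 (Or.inl ⟨b, h, le_rfl⟩)

theorem nadd_le_nadd_left (h : b ≤ c) (a : Ordinal) : a ♯ b ≤ a ♯ c := by
  rcases h.lt_or_eq with h | rfl
  exacts [(nadd_lt_nadd_left h a).le, le_rfl]

theorem nadd_le_nadd_right (h : b ≤ c) (a : Ordinal) : b ♯ a ≤ c ♯ a := by
  rcases h.lt_or_eq with h | rfl
  exacts [(nadd_lt_nadd_right h a).le, le_rfl]

theorem nadd_le_nadd {a' b' : Ordinal} (ha : a ≤ a') (hb : b ≤ b') : a ♯ b ≤ a' ♯ b' :=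
  (nadd_le_nadd_right ha b).trans (nadd_le_nadd_left hb a')

theorem nadd_lt_nadd_of_lt_of_le {a' b' : Ordinal} (ha : a < a') (hb : b ≤ b') :
    a ♯ b < a' ♯ b' :=
  (nadd_lt_nadd_right ha b).trans_le (nadd_le_nadd_left hb a')

theorem nadd_lt_nadd_of_le_of_lt {a' b' : Ordinal} (ha : a ≤ a') (hb : b < b') :
    a ♯ b < a' ♯ b' :=
  (nadd_le_nadd_right ha b).trans_lt (nadd_lt_nadd_left hb a')

theorem lt_of_nadd_lt_nadd_right (h : b ♯ a < c ♯ a) : b < c :=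
  lt_of_not_ge fun h' => h.not_ge (nadd_le_nadd_right h' a)

theorem nadd_comm (a b : Ordinal) : a ♯ b = b ♯ a := by
  induction a using WellFoundedLT.induction generalizing b with | _ a IHa =>
  induction b using WellFoundedLT.induction with | _ b IHb =>
  refine le_antisymm (nadd_le_iff.2 ⟨fun a' ha' => ?_, fun b' hb' => ?_⟩)
    (nadd_le_iff.2 ⟨fun b' hb' => ?_, fun a' ha' => ?_⟩)
  · rw [IHa a' ha']; exact nadd_lt_nadd_left ha' b
  · rw [IHb b' hb']; exact nadd_lt_nadd_right hb' a
  · rw [← IHb b' hb']; exact nadd_lt_nadd_left hb' a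
  · rw [← IHa a' ha']; exact nadd_lt_nadd_right ha' b

@[simp]
theorem nadd_zero (a : Ordinal) : a ♯ 0 = a := by
  induction a using WellFoundedLT.induction with | _ a IH =>
  refine le_antisymm (nadd_le_iff.2 ⟨fun a' ha' => ?_, fun _ h => (not_lt_zero h).elim⟩)
    (le_of_forall_lt fun a' ha' => ?_)
  · rwa [IH a' ha']
  · rw [← IH a' ha']; exact nadd_lt_nadd_right ha' 0

@[simp]
theorem zero_nadd (a : Ordinal) : 0 ♯ a = a := by rw [nadd_comm, nadd_zero]

theorem le_self_nadd : a ≤ a ♯ b :=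
  (nadd_zero a).symm.trans_le (nadd_le_nadd_left (zero_le (a := b)) a)

theorem nadd_assoc (a b c : Ordinal) : a ♯ b ♯ c = a ♯ (b ♯ c) := by
  induction a using WellFoundedLT.induction generalizing b c with | _ a IHa =>
  induction b using WellFoundedLT.induction generalizing c with | _ b IHb =>
  induction c using WellFoundedLT.induction with | _ c IHc =>
  refine le_antisymm (nadd_le_iff.2 ⟨fun d hd => ?_, fun c' hc' => ?_⟩)
    (nadd_le_iff.2 ⟨fun a' ha' => ?_, fun d hd => ?_⟩)
  · rcases lt_nadd_iff.1 hd with ⟨a', ha', hd⟩ | ⟨b', hb', hd⟩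
    · calc d ♯ c ≤ a' ♯ b ♯ c := nadd_le_nadd_right hd c
        _ = a' ♯ (b ♯ c) := IHa a' ha' b c
        _ < a ♯ (b ♯ c) := nadd_lt_nadd_right ha' _
    · calc d ♯ c ≤ a ♯ b' ♯ c := nadd_le_nadd_right hd c
        _ = a ♯ (b' ♯ c) := IHb b' hb' c
        _ < a ♯ (b ♯ c) := nadd_lt_nadd_left (nadd_lt_nadd_right hb' c) a
  · rw [IHc c' hc']; exact nadd_lt_nadd_left (nadd_lt_nadd_left hc' b) a
  · rw [← IHa a' ha']; exact nadd_lt_nadd_right (nadd_lt_nadd_right ha' b) c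
  · rcases lt_nadd_iff.1 hd with ⟨b', hb', hd⟩ | ⟨c', hc', hd⟩
    · calc a ♯ d ≤ a ♯ (b' ♯ c) := nadd_le_nadd_left hd a
        _ = a ♯ b' ♯ c := (IHb b' hb' c).symm
        _ < a ♯ b ♯ c := nadd_lt_nadd_right (nadd_lt_nadd_left hb' a) c
    · calc a ♯ d ≤ a ♯ (b ♯ c') := nadd_le_nadd_left hd a
        _ = a ♯ b ♯ c' := (IHc c' hc').symm
        _ < a ♯ b ♯ c := nadd_lt_nadd_left hc' _

instance : Std.Associative (α := Ordinal.{u}) (· ♯ ·) := ⟨nadd_assoc⟩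

instance : Std.Commutative (α := Ordinal.{u}) (· ♯ ·) := ⟨nadd_comm⟩

theorem add_le_nadd (a b : Ordinal) : a + b ≤ a ♯ b := by
  induction b using WellFoundedLT.induction with | _ b IH =>
  refine le_of_forall_lt fun d hd => ?_
  rcases eq_or_ne b 0 with rfl | hb
  · rwa [add_zero, ← nadd_zero a] at hd
  obtain ⟨b', hb', hd'⟩ := (lt_add_iff hb).1 hd
  exact hd'.trans_lt ((IH b' hb').trans_lt (nadd_lt_nadd_left hb' a))

theorem nadd_one (a : Ordinal) : a ♯ 1 = a + 1 := by
  induction a using WellFoundedLT.induction with | _ a IH =>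
  refine le_antisymm (nadd_le_iff.2 ⟨fun a' ha' => ?_, fun c' hc' => ?_⟩) (add_le_nadd a 1)
  · rw [IH a' ha']; exact Order.lt_add_one_iff.2 (Order.add_one_le_of_lt ha')
  · rw [Order.lt_one_iff.1 hc', nadd_zero]; exact Order.lt_add_one_iff.2 le_rfl

theorem nadd_natCast (a : Ordinal) (n : ℕ) : a ♯ n = a + n := by
  induction n with
  | zero => simp
  | succ n ih => rw [Nat.cast_succ, ← add_assoc, ← ih, ← nadd_one, ← nadd_one, nadd_assoc]

theorem nmul_nonempty (a b : Ordinal) :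
    {c : Ordinal | ∀ a' < a, ∀ b' < b, a' ⨳ b ♯ a ⨳ b' < c ♯ a' ⨳ b'}.Nonempty := by
  obtain ⟨c, hc⟩ : BddAbove (Set.range
      (fun x : Set.Iio a × Set.Iio b => x.1.1 ⨳ b ♯ a ⨳ x.2.1)) := bddAbove_of_small
  exact ⟨Order.succ c, fun x hx y hy =>
    (Order.lt_succ_of_le (hc ⟨(⟨x, hx⟩, ⟨y, hy⟩), rfl⟩)).trans_le le_self_nadd⟩

theorem nmul_nadd_lt {a' b' : Ordinal} (ha : a' < a) (hb : b' < b) :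
    a' ⨳ b ♯ a ⨳ b' < a ⨳ b ♯ a' ⨳ b' := by
  rw [nmul.eq_1 a b]
  exact csInf_mem (nmul_nonempty a b) a' ha b' hb

theorem nmul_nadd_le {a' b' : Ordinal} (ha : a' ≤ a) (hb : b' ≤ b) :
    a' ⨳ b ♯ a ⨳ b' ≤ a ⨳ b ♯ a' ⨳ b' := by
  rcases ha.lt_or_eq with ha | rfl
  · rcases hb.lt_or_eq with hb | rfl
    · exact (nmul_nadd_lt ha hb).le
    · rw [nadd_comm]
  · exact le_rfl

theorem lt_nmul_iff : c < a ⨳ b ↔ ∃ a' < a, ∃ b' < b, c ♯ a' ⨳ b' ≤ a' ⨳ b ♯ a ⨳ b' := by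
  refine ⟨fun h => ?_, fun ⟨a', ha, b', hb, h⟩ => ?_⟩
  · rw [nmul.eq_1] at h
    simpa using notMem_of_lt_csInf h ⟨0, fun _ _ => zero_le⟩
  · exact lt_of_nadd_lt_nadd_right (h.trans_lt (nmul_nadd_lt ha hb))

theorem nmul_le_iff : a ⨳ b ≤ c ↔ ∀ a' < a, ∀ b' < b, a' ⨳ b ♯ a ⨳ b' < c ♯ a' ⨳ b' := by
  rw [← not_lt, lt_nmul_iff]
  push Not
  rfl

theorem nmul_comm (a b : Ordinal) : a ⨳ b = b ⨳ a := by
  induction a using WellFoundedLT.induction generalizing b with | _ a IHa =>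
  induction b using WellFoundedLT.induction with | _ b IHb =>
  rw [nmul.eq_1 a b, nmul.eq_1 b a]
  congr! 3 with x
  refine ⟨fun H c hc d hd => ?_, fun H c hc d hd => ?_⟩
  · have h := H d hd c hc
    rwa [IHa d hd b, IHb c hc, IHa d hd c, nadd_comm (b ⨳ d)] at h
  · have h := H d hd c hc
    rwa [← IHb d hd, ← IHa c hc b, ← IHa c hc d, nadd_comm (a ⨳ d)] at h

@[simp]
theorem nmul_zero (a : Ordinal) : a ⨳ 0 = 0 :=
  nonpos_iff_eq_zero.1 (nmul_le_iff.2 fun _ _ _ h => (not_lt_zero h).elim)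

@[simp]
theorem zero_nmul (a : Ordinal) : 0 ⨳ a = 0 := by rw [nmul_comm, nmul_zero]

theorem nmul_lt_nmul_of_pos_left (h : a < b) (hc : 0 < c) : c ⨳ a < c ⨳ b :=
  lt_nmul_iff.2 ⟨0, hc, a, h, by simp⟩

theorem nmul_lt_nmul_of_pos_right (h : a < b) (hc : 0 < c) : a ⨳ c < b ⨳ c :=
  lt_nmul_iff.2 ⟨a, h, 0, hc, by simp⟩

theorem nmul_pos (ha : 0 < a) (hb : 0 < b) : 0 < a ⨳ b := by
  simpa using nmul_lt_nmul_of_pos_left hb ha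

theorem nmul_le_nmul_right (h : a ≤ b) (c : Ordinal) : a ⨳ c ≤ b ⨳ c := by
  rcases h.lt_or_eq with h | rfl
  · rcases (zero_le (a := c)).lt_or_eq with hc | rfl
    · exact (nmul_lt_nmul_of_pos_right h hc).le
    · simp
  · exact le_rfl

@[simp]
theorem nmul_one (a : Ordinal) : a ⨳ 1 = a := by
  induction a using WellFoundedLT.induction with | _ a IH =>
  refine le_antisymm (nmul_le_iff.2 fun a' ha' b' hb' => ?_) (le_of_forall_lt fun c hc => ?_)
  · rwa [Order.lt_one_iff.1 hb', nmul_zero, nmul_zero, nadd_zero, nadd_zero, IH a' ha']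
  · rw [← IH c hc]
    exact nmul_lt_nmul_of_pos_right hc zero_lt_one

/-- The equations `hx`, `hy` are hypotheses so that the rearrangements go to `ac_rfl`. -/
theorem lt_of_lt_of_eq_nadd {x y x' y' t : Ordinal} (h : x' < y') (hx : x' = x ♯ t)
    (hy : y' = y ♯ t) : x < y :=
  lt_of_nadd_lt_nadd_right (hx ▸ hy ▸ h)

theorem nmul_nadd (a b c : Ordinal) : a ⨳ (b ♯ c) = a ⨳ b ♯ a ⨳ c := by
  induction a using WellFoundedLT.induction generalizing b c with | _ a IHa =>
  induction b using WellFoundedLT.induction generalizing c with | _ b IHb =>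
  induction c using WellFoundedLT.induction with | _ c IHc =>
  refine le_antisymm (nmul_le_iff.2 fun a' ha d hd => ?_)
    (nadd_le_iff.2 ⟨fun d hd => ?_, fun d hd => ?_⟩)
  · rw [IHa a' ha b c]
    rcases lt_nadd_iff.1 hd with ⟨b', hb, hd⟩ | ⟨c', hc, hd⟩
    · have h := nadd_lt_nadd_of_lt_of_le (nmul_nadd_lt ha hb) (nmul_nadd_le ha.le hd)
      rw [IHa a' ha b' c, IHb b' hb c] at h
      exact lt_of_lt_of_eq_nadd (t := a ⨳ b' ♯ a' ⨳ b') h (by ac_rfl) (by ac_rfl)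
    · have h := nadd_lt_nadd_of_lt_of_le (nmul_nadd_lt ha hc) (nmul_nadd_le ha.le hd)
      rw [IHa a' ha b c', IHc c' hc] at h
      exact lt_of_lt_of_eq_nadd (t := a ⨳ c' ♯ a' ⨳ c') h (by ac_rfl) (by ac_rfl)
  · obtain ⟨a', ha, b', hb, H⟩ := lt_nmul_iff.1 hd
    have h := nmul_nadd_lt ha (nadd_lt_nadd_right hb c)
    rw [IHa a' ha b c, IHa a' ha b' c, IHb b' hb c] at h
    exact lt_of_lt_of_eq_nadd (t := a' ⨳ b' ♯ a' ⨳ c)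
      ((nadd_le_nadd_right H (a ⨳ c ♯ a' ⨳ c)).trans_lt (lt_of_eq_of_lt (by ac_rfl) h))
      (by ac_rfl) (by ac_rfl)
  · obtain ⟨a', ha, c', hc, H⟩ := lt_nmul_iff.1 hd
    have h := nmul_nadd_lt ha (nadd_lt_nadd_left hc b)
    rw [IHa a' ha b c, IHa a' ha b c', IHc c' hc] at h
    exact lt_of_lt_of_eq_nadd (t := a' ⨳ b ♯ a' ⨳ c')
      ((nadd_le_nadd_right H (a ⨳ b ♯ a' ⨳ b)).trans_lt (lt_of_eq_of_lt (by ac_rfl) h))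
      (by ac_rfl) (by ac_rfl)

theorem nadd_nmul (a b c : Ordinal) : (a ♯ b) ⨳ c = a ⨳ c ♯ b ⨳ c := by
  rw [nmul_comm, nmul_nadd, nmul_comm c, nmul_comm c]

theorem nmul_add_one (a b : Ordinal) : a ⨳ (b + 1) = a ⨳ b ♯ a := by
  rw [← nadd_one, nmul_nadd, nmul_one]

theorem nmul_natCast_right_comm (a b : Ordinal) (n : ℕ) : a ⨳ n ⨳ b = a ⨳ b ⨳ n := by
  induction n with
  | zero => simp
  | succ n ih => rw [Nat.cast_succ, nmul_add_one, nmul_add_one, nadd_nmul, ih]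

section OmegaPow

variable {δ : Ordinal.{u}}

-- The closure hypothesis `hδ` is what `isPrincipal_nadd_omega0_opow` provides, by induction on `δ`.
theorem omega0_opow_mul_nadd (hδ : IsPrincipal (· ♯ ·) (ω ^ δ)) (k : Ordinal) {r : Ordinal}
    (hr : r < ω ^ δ) : ω ^ δ * k ♯ r = ω ^ δ * k + r := by
  induction k using WellFoundedLT.induction generalizing r with | _ k IHk =>
  induction r using WellFoundedLT.induction with | _ r IHr =>
  refine le_antisymm (nadd_le_iff.2 ⟨fun x hx => ?_, fun r' hr' => ?_⟩) (add_le_nadd _ _)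
  · obtain ⟨q, hq, s, hs, rfl⟩ := lt_mul_iff.1 hx
    have hsr : s ♯ r < ω ^ δ := hδ hs hr
    calc (ω ^ δ * q + s) ♯ r ≤ ω ^ δ * q ♯ s ♯ r := nadd_le_nadd_right (add_le_nadd _ _) r
      _ = ω ^ δ * q + (s ♯ r) := by rw [nadd_assoc, IHk q hq hsr]
      _ < ω ^ δ * (q + 1) := by rw [mul_add_one]; exact add_lt_add_right hsr _
      _ ≤ ω ^ δ * k + r := (mul_le_mul_right (Order.add_one_le_of_lt hq) _).trans le_self_add
  · rw [IHr r' hr' (hr'.trans hr)]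
    exact add_lt_add_right hr' _

theorem add_nadd_lt_of_nadd_le (hδ : IsPrincipal (· ♯ ·) (ω ^ δ)) {x y z r : Ordinal}
    (hxy : x ♯ y ≤ ω ^ δ * z) (hr : r < ω ^ δ) : (x + r) ♯ y < ω ^ δ * (z + 1) :=
  calc (x + r) ♯ y ≤ x ♯ y ♯ r := by
        rw [nadd_assoc, nadd_comm y, ← nadd_assoc]; exact nadd_le_nadd_right (add_le_nadd x r) y
    _ ≤ ω ^ δ * z ♯ r := nadd_le_nadd_right hxy r
    _ < ω ^ δ * (z + 1) := by
        rw [omega0_opow_mul_nadd hδ z hr, mul_add_one]; exact add_lt_add_right hr _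

theorem omega0_opow_mul_nadd_le (hδ : IsPrincipal (· ♯ ·) (ω ^ δ)) (k l : Ordinal) :
    ω ^ δ * k ♯ ω ^ δ * l ≤ ω ^ δ * (k ♯ l) := by
  induction k using WellFoundedLT.induction generalizing l with | _ k IHk =>
  induction l using WellFoundedLT.induction with | _ l IHl =>
  refine nadd_le_iff.2 ⟨fun x hx => ?_, fun y hy => ?_⟩
  · obtain ⟨q, hq, r, hr, rfl⟩ := lt_mul_iff.1 hx
    exact (add_nadd_lt_of_nadd_le hδ (IHk q hq l) hr).trans_le
      (mul_le_mul_right (Order.add_one_le_of_lt (nadd_lt_nadd_right hq l)) _)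
  · obtain ⟨q, hq, r, hr, rfl⟩ := lt_mul_iff.1 hy
    have hqk : ω ^ δ * q ♯ ω ^ δ * k ≤ ω ^ δ * (q ♯ k) := by
      rw [nadd_comm, nadd_comm q]; exact IHl q hq
    rw [nadd_comm, nadd_comm k]
    exact (add_nadd_lt_of_nadd_le hδ hqk hr).trans_le
      (mul_le_mul_right (Order.add_one_le_of_lt (nadd_lt_nadd_right hq k)) _)

theorem isPrincipal_nadd_omega0_opow (γ : Ordinal) : IsPrincipal (· ♯ ·) (ω ^ γ) := by
  induction γ using WellFoundedLT.induction with | _ γ IH =>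
  intro x y hx hy
  rcases eq_or_ne γ 0 with rfl | hγ
  · rw [opow_zero, Order.lt_one_iff] at hx hy ⊢
    simp [hx, hy]
  obtain ⟨δ, hδ, n, hn⟩ := (lt_omega0_opow hγ).1 hx
  obtain ⟨δ', hδ', m, hm⟩ := (lt_omega0_opow hγ).1 hy
  have hε : max δ δ' < γ := max_lt hδ hδ'
  have hle : ∀ {ζ}, ζ ≤ max δ δ' → ∀ j : ℕ, ω ^ ζ * j ≤ ω ^ max δ δ' * j := fun h j =>
    mul_le_mul_left (opow_le_opow_right omega0_pos h) _
  calc x ♯ y < ω ^ max δ δ' * n ♯ ω ^ max δ δ' * m :=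
        nadd_lt_nadd_of_lt_of_le (hn.trans_le (hle (le_max_left _ _) n))
          (hm.le.trans (hle (le_max_right _ _) m))
    _ ≤ ω ^ max δ δ' * (n ♯ m) := omega0_opow_mul_nadd_le (IH _ hε) _ _
    _ = ω ^ max δ δ' * (n + m : ℕ) := by rw [nadd_natCast, Nat.cast_add]
    _ < ω ^ γ := opow_mul_lt_opow (natCast_lt_omega0 _) hε

theorem omega0_opow_nadd_le_add {μ c : Ordinal} (hc : c < ω ^ Order.succ μ) :
    ω ^ μ ♯ c ≤ ω ^ μ + c := by
  rw [opow_succ] at hc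
  obtain ⟨q, hq, r, hr, rfl⟩ := lt_mul_iff.1 hc
  obtain ⟨n, rfl⟩ := lt_omega0.1 hq
  have hμ := isPrincipal_nadd_omega0_opow μ
  have h1n : (1 : Ordinal) ♯ n = 1 + n := by
    rw [nadd_comm, nadd_one, ← Nat.cast_succ, ← Nat.cast_one, ← Nat.cast_add, Nat.add_comm]
  calc ω ^ μ ♯ (ω ^ μ * n + r) ≤ ω ^ μ * 1 ♯ ω ^ μ * n ♯ r := by
        rw [mul_one, nadd_assoc]; exact nadd_le_nadd_left (add_le_nadd _ _) _
    _ ≤ ω ^ μ * (1 ♯ n) ♯ r := nadd_le_nadd_right (omega0_opow_mul_nadd_le hμ 1 n) r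
    _ = ω ^ μ + (ω ^ μ * n + r) := by
        rw [omega0_opow_mul_nadd hμ _ hr, h1n, mul_add, mul_one, add_assoc]

theorem omega0_opow_nmul_natCast (δ : Ordinal) (n : ℕ) : ω ^ δ ⨳ n = ω ^ δ * n := by
  induction n with
  | zero => simp
  | succ n ih =>
    rw [Nat.cast_succ, nmul_add_one, ih, mul_add_one]
    refine le_antisymm ?_ (add_le_nadd _ _)
    simpa [nadd_one, mul_add_one] using
      omega0_opow_mul_nadd_le (isPrincipal_nadd_omega0_opow δ) n 1

theorem nmul_omega0_opow_lt {μ ν a : Ordinal} (hE : ∀ δ < μ, ω ^ δ ⨳ ω ^ ν = ω ^ (δ ♯ ν))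
    (ha : a < ω ^ μ) : a ⨳ ω ^ ν < ω ^ (μ ♯ ν) := by
  rcases eq_or_ne μ 0 with rfl | hμ
  · rw [opow_zero, Order.lt_one_iff] at ha
    rw [ha, zero_nmul]
    exact opow_pos _ omega0_pos
  obtain ⟨δ, hδ, n, hn⟩ := (lt_omega0_opow hμ).1 ha
  calc a ⨳ ω ^ ν ≤ ω ^ δ ⨳ n ⨳ ω ^ ν := by
        rw [omega0_opow_nmul_natCast]; exact nmul_le_nmul_right hn.le _
    _ = ω ^ (δ ♯ ν) * n := by rw [nmul_natCast_right_comm, hE δ hδ, omega0_opow_nmul_natCast]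
    _ < ω ^ (μ ♯ ν) := opow_mul_lt_opow (natCast_lt_omega0 n) (nadd_lt_nadd_right hδ ν)

theorem omega0_opow_nadd_mul_lt_nmul {μ' μ ν : Ordinal} (hE : ω ^ μ' ⨳ ω ^ ν = ω ^ (μ' ♯ ν))
    (h : μ' < μ) (k : ℕ) : ω ^ (μ' ♯ ν) * k < ω ^ μ ⨳ ω ^ ν :=
  calc ω ^ (μ' ♯ ν) * k = ω ^ μ' * k ⨳ ω ^ ν := by
        rw [← omega0_opow_nmul_natCast, ← hE, ← nmul_natCast_right_comm, omega0_opow_nmul_natCast]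
    _ < ω ^ μ ⨳ ω ^ ν :=
        nmul_lt_nmul_of_pos_right (opow_mul_lt_opow (natCast_lt_omega0 k) h) (opow_pos _ omega0_pos)

theorem omega0_opow_nmul (μ ν : Ordinal) : ω ^ μ ⨳ ω ^ ν = ω ^ (μ ♯ ν) := by
  induction μ using WellFoundedLT.induction generalizing ν with | _ μ IHμ =>
  induction ν using WellFoundedLT.induction with | _ ν IHν =>
  have hIHν : ∀ δ < ν, ω ^ δ ⨳ ω ^ μ = ω ^ (δ ♯ μ) := fun δ hδ => by
    rw [nmul_comm, nadd_comm, IHν δ hδ]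
  refine le_antisymm (nmul_le_iff.2 fun a ha b hb => ?_) (le_of_forall_lt fun c hc => ?_)
  · have hb' : ω ^ μ ⨳ b < ω ^ (μ ♯ ν) := by
      rw [nmul_comm, nadd_comm]; exact nmul_omega0_opow_lt hIHν hb
    exact (isPrincipal_nadd_omega0_opow _ (nmul_omega0_opow_lt (fun δ hδ => IHμ δ hδ ν) ha)
      hb').trans_le le_self_nadd
  rcases eq_or_ne (μ ♯ ν) 0 with h0 | h0
  · rw [h0, opow_zero, Order.lt_one_iff] at hc
    exact hc ▸ nmul_pos (opow_pos _ omega0_pos) (opow_pos _ omega0_pos)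
  obtain ⟨ξ, hξ, k, hk⟩ := (lt_omega0_opow h0).1 hc
  rcases lt_nadd_iff.1 hξ with ⟨μ', hμ', hle⟩ | ⟨ν', hν', hle⟩
  · calc c < ω ^ ξ * k := hk
      _ ≤ ω ^ (μ' ♯ ν) * k := mul_le_mul_left (opow_le_opow_right omega0_pos hle) _
      _ < ω ^ μ ⨳ ω ^ ν := omega0_opow_nadd_mul_lt_nmul (IHμ μ' hμ' ν) hμ' k
  · calc c < ω ^ ξ * k := hk
      _ ≤ ω ^ (ν' ♯ μ) * k := by
        rw [nadd_comm]; exact mul_le_mul_left (opow_le_opow_right omega0_pos hle) _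
      _ < ω ^ μ ⨳ ω ^ ν := by
        rw [nmul_comm]; exact omega0_opow_nadd_mul_lt_nmul (hIHν ν' hν') hν' k

theorem nadd_nmul_lt_omega0_opow {μ ν a b : Ordinal} (ha : a < ω ^ μ) (hb : b < ω ^ ν) :
    a ⨳ ω ^ ν ♯ ω ^ μ ⨳ b < ω ^ (μ ♯ ν) := by
  have hb' : b ⨳ ω ^ μ < ω ^ (ν ♯ μ) := nmul_omega0_opow_lt (fun δ _ => omega0_opow_nmul δ μ) hb
  rw [nmul_comm, nadd_comm] at hb'
  exact isPrincipal_nadd_omega0_opow _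
    (nmul_omega0_opow_lt (fun δ _ => omega0_opow_nmul δ ν) ha) hb'

end OmegaPow

end Ordinal

section OrderTypeSet

variable {Γ : Type*} [LinearOrder Γ] {s t : Set Γ}

theorem orderTypeSet_congr (h : s = t) (hs : s.IsWF) (ht : t.IsWF) :
    orderTypeSet s hs = orderTypeSet t ht := by
  subst h; rfl

theorem orderTypeSet_mono (hs : s.IsWF) (ht : t.IsWF) (h : s ⊆ t) :
    orderTypeSet s hs ≤ orderTypeSet t ht :=
  let : IsWellFounded t (· < ·) := ⟨ht⟩
  let : IsWellFounded s (· < ·) := ⟨hs⟩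
  RelEmbedding.ordinal_type_le ⟨⟨Set.inclusion h, Set.inclusion_injective h⟩, Iff.rfl⟩

theorem orderTypeSet_eq_zero_iff (hs : s.IsWF) : orderTypeSet s hs = 0 ↔ s = ∅ :=
  let : IsWellFounded s (· < ·) := ⟨hs⟩
  Ordinal.type_eq_zero_iff_isEmpty.trans Set.isEmpty_coe_sort

theorem orderTypeSet_inter_Iio_eq_typein (hs : s.IsWF) {x : Γ} (hx : x ∈ s) :
    letI : IsWellFounded s (· < ·) := ⟨hs⟩
    orderTypeSet (s ∩ Set.Iio x) (hs.mono Set.inter_subset_left) =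
      Ordinal.typein ((· < ·) : s → s → Prop) ⟨x, hx⟩ := by
  let : IsWellFounded s (· < ·) := ⟨hs⟩
  let : IsWellFounded ↥(s ∩ Set.Iio x) (· < ·) := ⟨hs.mono Set.inter_subset_left⟩
  rw [← Ordinal.type_subrel]
  exact RelIso.ordinalType_congr
    { toFun := fun y => ⟨⟨y.1, y.2.1⟩, y.2.2⟩
      invFun := fun z => ⟨z.1.1, z.1.2, z.2⟩
      left_inv := fun _ => rfl
      right_inv := fun _ => rfl
      map_rel_iff' := Iff.rfl }

theorem orderTypeSet_inter_Iio_lt (hs : s.IsWF) {x : Γ} (hx : x ∈ s) :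
    orderTypeSet (s ∩ Set.Iio x) (hs.mono Set.inter_subset_left) < orderTypeSet s hs := by
  let : IsWellFounded s (· < ·) := ⟨hs⟩
  rw [orderTypeSet_inter_Iio_eq_typein hs hx]
  exact Ordinal.typein_lt_type _ _

theorem exists_orderTypeSet_inter_Iio_eq (hs : s.IsWF) {o : Ordinal} (ho : o < orderTypeSet s hs) :
    ∃ x ∈ s, orderTypeSet (s ∩ Set.Iio x) (hs.mono Set.inter_subset_left) = o := by
  let : IsWellFounded s (· < ·) := ⟨hs⟩
  obtain ⟨x, hx⟩ := Ordinal.typein_surj ((· < ·) : s → s → Prop) ho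
  exact ⟨x.1, x.2, (orderTypeSet_inter_Iio_eq_typein hs x.2).trans hx⟩

theorem orderTypeSet_le_of_forall_lt {c : Ordinal} (hs : s.IsWF)
    (H : ∀ x ∈ s, orderTypeSet (s ∩ Set.Iio x) (hs.mono Set.inter_subset_left) < c) :
    orderTypeSet s hs ≤ c := by
  by_contra! hc
  obtain ⟨x, hx, hxc⟩ := exists_orderTypeSet_inter_Iio_eq hs hc
  exact (H x hx).ne hxc

theorem orderTypeSet_union_le (hs : s.IsWF) (ht : t.IsWF) :
    orderTypeSet (s ∪ t) (hs.union ht) ≤ orderTypeSet s hs ♯ orderTypeSet t ht := by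
  obtain ⟨o, ho⟩ : ∃ o, orderTypeSet s hs ♯ orderTypeSet t ht = o := ⟨_, rfl⟩
  induction o using WellFoundedLT.induction generalizing s t with | _ o IH =>
  refine orderTypeSet_le_of_forall_lt _ fun x hx => ?_
  have hsx := hs.mono (Set.inter_subset_left (t := Set.Iio x))
  have htx := ht.mono (Set.inter_subset_left (t := Set.Iio x))
  have hmono : orderTypeSet (s ∩ Set.Iio x) hsx ♯ orderTypeSet (t ∩ Set.Iio x) htx <
      orderTypeSet s hs ♯ orderTypeSet t ht := by
    rcases hx with hx | hx
    · exact nadd_lt_nadd_of_lt_of_le (orderTypeSet_inter_Iio_lt hs hx)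
        (orderTypeSet_mono _ _ Set.inter_subset_left)
    · exact nadd_lt_nadd_of_le_of_lt (orderTypeSet_mono _ _ Set.inter_subset_left)
        (orderTypeSet_inter_Iio_lt ht hx)
  rw [orderTypeSet_congr (Set.union_inter_distrib_right s t _) _ (hsx.union htx)]
  exact (IH _ (ho ▸ hmono) hsx htx rfl).trans_lt hmono

theorem orderTypeSet_inter_Iio_add_inter_Ici_le (hs : s.IsWF) (x : Γ) :
    orderTypeSet (s ∩ Set.Iio x) (hs.mono Set.inter_subset_left) +
      orderTypeSet (s ∩ Set.Ici x) (hs.mono Set.inter_subset_left) ≤ orderTypeSet s hs := by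
  let : IsWellFounded s (· < ·) := ⟨hs⟩
  let : IsWellFounded ↥(s ∩ Set.Iio x) (· < ·) := ⟨hs.mono Set.inter_subset_left⟩
  let : IsWellFounded ↥(s ∩ Set.Ici x) (· < ·) := ⟨hs.mono Set.inter_subset_left⟩
  let f : ↥(s ∩ Set.Iio x) ⊕ ↥(s ∩ Set.Ici x) → s :=
    Sum.elim (Set.inclusion Set.inter_subset_left) (Set.inclusion Set.inter_subset_left)
  have hf : ∀ a b, Sum.Lex (· < ·) (· < ·) a b → f a < f b := by
    rintro (a | a) (b | b) h
    · exact (Sum.lex_inl_inl.1 h : a < b)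
    · exact a.2.2.trans_le b.2.2
    · cases h
    · exact (Sum.lex_inr_inr.1 h : a < b)
  have h := (RelEmbedding.ofMonotone f hf).ordinal_type_le
  rwa [Ordinal.type_sum_lex] at h

theorem exists_orderTypeSet_split (hs : s.IsWF)
    (h : ω ^ log ω (orderTypeSet s hs) < orderTypeSet s hs) :
    ∃ x, orderTypeSet (s ∩ Set.Iio x) (hs.mono Set.inter_subset_left) < orderTypeSet s hs ∧
      orderTypeSet (s ∩ Set.Ici x) (hs.mono Set.inter_subset_left) < orderTypeSet s hs ∧
      orderTypeSet (s ∩ Set.Iio x) (hs.mono Set.inter_subset_left) ♯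
        orderTypeSet (s ∩ Set.Ici x) (hs.mono Set.inter_subset_left) ≤ orderTypeSet s hs := by
  obtain ⟨x, -, hx⟩ := exists_orderTypeSet_inter_Iio_eq hs h
  set d := orderTypeSet (s ∩ Set.Ici x) (hs.mono Set.inter_subset_left)
  have hsplit : ω ^ log ω (orderTypeSet s hs) + d ≤ orderTypeSet s hs :=
    hx ▸ orderTypeSet_inter_Iio_add_inter_Ici_le hs x
  have hd : d < ω ^ Order.succ (log ω (orderTypeSet s hs)) :=
    le_add_self.trans_lt (hsplit.trans_lt (lt_opow_succ_log_self one_lt_omega0 _))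
  have hnadd := (omega0_opow_nadd_le_add hd).trans hsplit
  refine ⟨x, hx ▸ h, ?_, hx ▸ hnadd⟩
  calc d = 0 ♯ d := (zero_nadd d).symm
    _ < _ := nadd_lt_nadd_right (opow_pos _ omega0_pos) d
    _ ≤ orderTypeSet s hs := hnadd

end OrderTypeSet

open Pointwise

theorem add_inter_Iio_subset {M : Type*} [Add M] [LinearOrder M] [AddLeftMono M] [AddRightMono M]
    {S T : Set M} {a b : M} :
    (S + T) ∩ Set.Iio (a + b) ⊆ (S ∩ Set.Iio a + T) ∪ (S + T ∩ Set.Iio b) := by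
  rintro _ ⟨⟨u, hu, v, hv, rfl⟩, huv⟩
  by_cases hua : u < a
  · exact Or.inl ⟨u, ⟨hu, hua⟩, v, hv, rfl⟩
  · refine Or.inr ⟨u, hu, v, ⟨hv, lt_of_not_ge fun hbv => ?_⟩, rfl⟩
    exact huv.not_ge (add_le_add (not_lt.1 hua) hbv)

section AddSet

variable {G : Type*} [AddCommMonoid G] [LinearOrder G] [IsOrderedCancelAddMonoid G] {S T : Set G}

theorem orderTypeSet_add_le_of_split (hS : S.IsWF) (hT : T.IsWF)
    (IH : ∀ S' (hS' : S' ⊆ S), orderTypeSet S' (hS.mono hS') < orderTypeSet S hS →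
      orderTypeSet (S' + T) ((hS.mono hS').add hT) ≤
        orderTypeSet S' (hS.mono hS') ⨳ orderTypeSet T hT)
    (h : ω ^ log ω (orderTypeSet S hS) < orderTypeSet S hS) :
    orderTypeSet (S + T) (hS.add hT) ≤ orderTypeSet S hS ⨳ orderTypeSet T hT := by
  obtain ⟨x, h₁, h₂, hle⟩ := exists_orderTypeSet_split hS h
  have hS₁ := hS.mono (Set.inter_subset_left (t := Set.Iio x))
  have hS₂ := hS.mono (Set.inter_subset_left (t := Set.Ici x))
  have hcover : S + T = (S ∩ Set.Iio x + T) ∪ (S ∩ Set.Ici x + T) := by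
    rw [← Set.union_add, ← Set.inter_union_distrib_left, Set.Iio_union_Ici, Set.inter_univ]
  calc orderTypeSet (S + T) (hS.add hT)
      = orderTypeSet _ ((hS₁.add hT).union (hS₂.add hT)) := orderTypeSet_congr hcover _ _
    _ ≤ orderTypeSet _ (hS₁.add hT) ♯ orderTypeSet _ (hS₂.add hT) := orderTypeSet_union_le _ _
    _ ≤ orderTypeSet _ hS₁ ⨳ orderTypeSet T hT ♯ orderTypeSet _ hS₂ ⨳ orderTypeSet T hT :=
        nadd_le_nadd (IH _ Set.inter_subset_left h₁) (IH _ Set.inter_subset_left h₂)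
    _ ≤ orderTypeSet S hS ⨳ orderTypeSet T hT := by
        rw [← nadd_nmul]; exact nmul_le_nmul_right hle _

theorem orderTypeSet_add_le_of_omega0_opow (hS : S.IsWF) (hT : T.IsWF)
    (IHS : ∀ S' (hS' : S' ⊆ S), orderTypeSet S' (hS.mono hS') < orderTypeSet S hS →
      orderTypeSet (S' + T) ((hS.mono hS').add hT) ≤
        orderTypeSet S' (hS.mono hS') ⨳ orderTypeSet T hT)
    (IHT : ∀ T' (hT' : T' ⊆ T), orderTypeSet T' (hT.mono hT') < orderTypeSet T hT →
      orderTypeSet (S + T') (hS.add (hT.mono hT')) ≤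
        orderTypeSet S hS ⨳ orderTypeSet T' (hT.mono hT'))
    {μ ν : Ordinal} (hμ : orderTypeSet S hS = ω ^ μ) (hν : orderTypeSet T hT = ω ^ ν) :
    orderTypeSet (S + T) (hS.add hT) ≤ orderTypeSet S hS ⨳ orderTypeSet T hT := by
  rw [hμ, hν, omega0_opow_nmul]
  refine orderTypeSet_le_of_forall_lt _ ?_
  rintro _ ⟨a, ha, b, hb, rfl⟩
  have hSa := hS.mono (Set.inter_subset_left (t := Set.Iio a))
  have hTb := hT.mono (Set.inter_subset_left (t := Set.Iio b))
  have ha' := orderTypeSet_inter_Iio_lt hS ha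
  have hb' := orderTypeSet_inter_Iio_lt hT hb
  calc _ ≤ orderTypeSet _ ((hSa.add hT).union (hS.add hTb)) :=
        orderTypeSet_mono _ _ add_inter_Iio_subset
    _ ≤ orderTypeSet _ (hSa.add hT) ♯ orderTypeSet _ (hS.add hTb) := orderTypeSet_union_le _ _
    _ ≤ orderTypeSet _ hSa ⨳ ω ^ ν ♯ ω ^ μ ⨳ orderTypeSet _ hTb :=
        nadd_le_nadd (hν ▸ IHS _ Set.inter_subset_left ha') (hμ ▸ IHT _ Set.inter_subset_left hb')
    _ < ω ^ (μ ♯ ν) := nadd_nmul_lt_omega0_opow (hμ ▸ ha') (hν ▸ hb')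

theorem orderTypeSet_add_le_nmul (hS : S.IsWF) (hT : T.IsWF) :
    orderTypeSet (S + T) (hS.add hT) ≤ orderTypeSet S hS ⨳ orderTypeSet T hT := by
  obtain ⟨o, ho⟩ : ∃ o, orderTypeSet S hS ♯ orderTypeSet T hT = o := ⟨_, rfl⟩
  induction o using WellFoundedLT.induction generalizing S T with | _ o IH =>
  subst ho
  by_cases hempty : S = ∅ ∨ T = ∅
  · have h0 : S + T = ∅ := by rcases hempty with rfl | rfl <;> simp
    rw [(orderTypeSet_eq_zero_iff _).2 h0]
    exact zero_le
  have hS0 : orderTypeSet S hS ≠ 0 := fun h => hempty (Or.inl ((orderTypeSet_eq_zero_iff _).1 h))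
  have hT0 : orderTypeSet T hT ≠ 0 := fun h => hempty (Or.inr ((orderTypeSet_eq_zero_iff _).1 h))
  have IHS : ∀ S' (hS' : S' ⊆ S), orderTypeSet S' (hS.mono hS') < orderTypeSet S hS → _ :=
    fun S' hS' h => IH _ (nadd_lt_nadd_right h _) _ _ rfl
  have IHT : ∀ T' (hT' : T' ⊆ T), orderTypeSet T' (hT.mono hT') < orderTypeSet T hT → _ :=
    fun T' hT' h => IH _ (nadd_lt_nadd_left h _) _ _ rfl
  rcases (opow_log_le_self ω hS0).lt_or_eq with hμ | hμ
  · exact orderTypeSet_add_le_of_split hS hT IHS hμ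
  rcases (opow_log_le_self ω hT0).lt_or_eq with hν | hν
  · rw [orderTypeSet_congr (add_comm S T) _ (hT.add hS), nmul_comm]
    refine orderTypeSet_add_le_of_split hT hS (fun T' hT' h => ?_) hν
    rw [orderTypeSet_congr (add_comm T' S) _ (hS.add (hT.mono hT')), nmul_comm]
    exact IHT T' hT' h
  exact orderTypeSet_add_le_of_omega0_opow hS hT IHS IHT hμ.symm hν.symm

end AddSet

/-- For a linearly ordered abelian group `G` and all `b, c ∈ K((G))`:
`ot (b + c) ≤ ot b ♯ ot c` and `ot (b * c) ≤ ot b ⨳ ot c`,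
where `♯` is the Hessenberg natural sum and `⨳` the Hessenberg natural product. -/
theorem ot_add_le_and_ot_mul_le {G : Type*} [AddCommGroup G] [LinearOrder G] [IsOrderedAddMonoid G]
    {K : Type*} [Field K] (b c : HahnSeries G K) :
    (b + c).ot ≤ b.ot ♯ c.ot ∧ (b * c).ot ≤ b.ot ⨳ c.ot :=
  ⟨(orderTypeSet_mono _ (b.isWF_support.union c.isWF_support)
      (HahnSeries.support_add_subset b c)).trans (orderTypeSet_union_le _ _),
    (orderTypeSet_mono _ (b.isWF_support.add c.isWF_support) HahnSeries.support_mul_subset).trans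
      (orderTypeSet_add_le_nmul _ _)⟩
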